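/- Let G_0, G be probability measures on a measurable space Θ with E_{G_0}(f_G(X)/f_{G_0}(X))² < ∞, where f_G(x) = ∫ f(x|ϑ) G(dϑ) is the mixture density with respect to a dominating measure ν, and assume ∫ f_G I{f_{G_0} > 0} dν = 1. Set G_t = (1−t)G_0 + tG and f_t = f_{G_t}. Then the path t ↦ G_t satisfies the Hellinger differentiability conditions E_{G_0}(√(f_t/f_0) − 1 − tρ/2)² = o(t²) and ∫ f_t I{f_0 > 0} dν = 1 + o(t²) with score ρ(x) = f_G(x)/f_{G_0}(x) − 1. -/

import Mathlib

/-!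
On `{f₀ > 0}` the likelihood ratio along the path is `r = f_t/f₀ = 1 + tρ`, and the Hellinger
remainder `√r − 1 − (r − 1)/2 = −(√r − 1)²/2` has absolute value at most `|r − 1|/2` and at
most `(r − 1)²/2`. The first bound dominates the squared remainder divided by `t²` by
`ρ² f₀ / 4`, which is integrable since `E_{G₀}(f_G/f₀)² < ∞`; the second makes it vanish
pointwise as `t → 0`, so dominated convergence gives the first claim. The second holds exactly:
`∫ f_t I{f₀ > 0} dν = (1 − t) + t = 1`.
-/

open MeasureTheory Filter Asymptotics Topology

theorem isLittleO_integral_of_dominated {α ι : Type*} [MeasurableSpace α] {μ : Measure α}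
    {l : Filter ι} [l.IsCountablyGenerated] {g : ι → α → ℝ} {φ : ι → ℝ} {D : α → ℝ}
    (hφ : ∀ᶠ t in l, φ t ≠ 0) (hg : ∀ᶠ t in l, AEStronglyMeasurable (g t) μ)
    (hD : Integrable D μ) (hbound : ∀ᶠ t in l, ∀ᵐ x ∂μ, ‖g t x‖ ≤ ‖φ t‖ * D x)
    (hlim : ∀ᵐ x ∂μ, (fun t => g t x) =o[l] φ) :
    (fun t => ∫ x, g t x ∂μ) =o[l] φ := by
  have hzero {f : ι → ℝ} : ∀ᶠ t in l, φ t = 0 → f t = 0 := hφ.mono fun t ht h => absurd h ht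
  rw [isLittleO_iff_tendsto' hzero]
  have hquot : Tendsto (fun t => ∫ x, g t x / φ t ∂μ) l (𝓝 (∫ _, (0 : ℝ) ∂μ)) := by
    refine tendsto_integral_filter_of_dominated_convergence D
      (hg.mono fun t ht => by fun_prop) ?_ hD ?_
    · filter_upwards [hφ, hbound] with t ht hbt
      filter_upwards [hbt] with x hx
      rwa [norm_div, div_le_iff₀ (norm_pos_iff.mpr ht), mul_comm]
    · filter_upwards [hlim] with x hx
      exact (isLittleO_iff_tendsto' hzero).mp hx
  simpa only [integral_div, integral_zero] using hquot

theorem sq_sqrt_sub_one_sub_half_le_sq (r : ℝ) :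
    (√r - 1 - (r - 1) / 2) ^ 2 ≤ (r - 1) ^ 2 / 4 := by
  rcases le_or_gt 0 r with hr | hr
  · obtain ⟨s, hs, rfl⟩ : ∃ s, 0 ≤ s ∧ r = s ^ 2 :=
      ⟨√r, Real.sqrt_nonneg r, (Real.sq_sqrt hr).symm⟩
    rw [Real.sqrt_sq hs]
    nlinarith [mul_nonneg hs (sq_nonneg (s - 1))]
  · rw [Real.sqrt_eq_zero'.mpr hr.le]
    nlinarith

theorem sq_sqrt_sub_one_sub_half_le_pow_four (r : ℝ) :
    (√r - 1 - (r - 1) / 2) ^ 2 ≤ (r - 1) ^ 4 / 4 := by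
  rcases le_or_gt 0 r with hr | hr
  · obtain ⟨s, hs, rfl⟩ : ∃ s, 0 ≤ s ∧ r = s ^ 2 :=
      ⟨√r, Real.sqrt_nonneg r, (Real.sq_sqrt hr).symm⟩
    rw [Real.sqrt_sq hs]
    have hs4 : 1 ≤ (s + 1) ^ 4 := one_le_pow₀ (by linarith)
    nlinarith [mul_le_mul_of_nonneg_left hs4 (by positivity : (0:ℝ) ≤ (s - 1) ^ 4)]
  · rw [Real.sqrt_eq_zero'.mpr hr.le]
    nlinarith [mul_pos (mul_pos (neg_pos.mpr hr) (by linarith : (0:ℝ) < 3 - r))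
      (by nlinarith : (0:ℝ) < r ^ 2 - r + 2)]

theorem mixture_ratio_sub_one {a : ℝ} (ha : a ≠ 0) (b t : ℝ) :
    ((1 - t) * a + t * b) / a - 1 = t * (b / a - 1) := by
  field_simp
  ring

theorem mixture_remainder_le_sq {a : ℝ} (ha : 0 ≤ a) (b t : ℝ) :
    (√(((1 - t) * a + t * b) / a) - 1 - t * (b / a - 1) / 2) ^ 2 * a
      ≤ t ^ 2 * ((b / a - 1) ^ 2 * a / 4) := by
  rcases ha.eq_or_lt with rfl | ha
  · simp
  calc _ ≤ (((1 - t) * a + t * b) / a - 1) ^ 2 / 4 * a := by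
        rw [← mixture_ratio_sub_one ha.ne']
        exact mul_le_mul_of_nonneg_right (sq_sqrt_sub_one_sub_half_le_sq _) ha.le
    _ = _ := by rw [mixture_ratio_sub_one ha.ne']; ring

theorem mixture_remainder_le_pow_four {a : ℝ} (ha : 0 ≤ a) (b t : ℝ) :
    (√(((1 - t) * a + t * b) / a) - 1 - t * (b / a - 1) / 2) ^ 2 * a
      ≤ t ^ 4 * ((b / a - 1) ^ 4 * a / 4) := by
  rcases ha.eq_or_lt with rfl | ha
  · simp
  calc _ ≤ (((1 - t) * a + t * b) / a - 1) ^ 4 / 4 * a := by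
        rw [← mixture_ratio_sub_one ha.ne']
        exact mul_le_mul_of_nonneg_right (sq_sqrt_sub_one_sub_half_le_pow_four _) ha.le
    _ = _ := by rw [mixture_ratio_sub_one ha.ne']; ring

theorem mixture_remainder_isLittleO {a : ℝ} (ha : 0 ≤ a) (b : ℝ) :
    (fun t => (√(((1 - t) * a + t * b) / a) - 1 - t * (b / a - 1) / 2) ^ 2 * a)
      =o[𝓝 0] fun t => t ^ 2 := by
  refine IsBigO.trans_isLittleO ?_ (isLittleO_pow_pow (by norm_num : 2 < 4))
  refine .of_bound ((b / a - 1) ^ 4 * a / 4) (.of_forall fun t => ?_)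
  rw [Real.norm_of_nonneg (by positivity), Real.norm_of_nonneg (by positivity)]
  exact (mixture_remainder_le_pow_four ha _ _).trans_eq (mul_comm _ _)

section

variable {α : Type*} [MeasurableSpace α] {μ : Measure α} {f₀ f : α → ℝ}

theorem integrable_sq_ratio_sub_one_mul (hf₀ : 0 ≤ f₀) (hf₀m : Measurable f₀) (hfm : Measurable f)
    (hf₀i : Integrable f₀ μ) (hL2 : Integrable (fun x => (f x / f₀ x) ^ 2 * f₀ x) μ) :
    Integrable (fun x => (f x / f₀ x - 1) ^ 2 * f₀ x) μ := by
  refine ((hL2.add hf₀i).const_mul 2).mono' (by fun_prop) (ae_of_all _ fun x => ?_)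
  have h₀ : 0 ≤ f₀ x := hf₀ x
  rw [Real.norm_of_nonneg (by positivity), Pi.add_apply]
  nlinarith [mul_nonneg (sq_nonneg (f x / f₀ x + 1)) h₀]

theorem integral_mixture_indicator_pos (hf₀ : 0 ≤ f₀) (hf₀i : Integrable f₀ μ)
    (hfi : Integrable (fun x => if 0 < f₀ x then f x else 0) μ) (t : ℝ) :
    ∫ x, (if 0 < f₀ x then (1 - t) * f₀ x + t * f x else 0) ∂μ
      = (1 - t) * ∫ x, f₀ x ∂μ + t * ∫ x, (if 0 < f₀ x then f x else 0) ∂μ := by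
  have hsplit : (fun x => if 0 < f₀ x then (1 - t) * f₀ x + t * f x else 0)
      = fun x => (1 - t) * f₀ x + t * (if 0 < f₀ x then f x else 0) := by
    ext x
    split_ifs with hx
    · rfl
    · simp [le_antisymm (not_lt.mp hx) (hf₀ x)]
  rw [hsplit, integral_add (hf₀i.const_mul _) (hfi.const_mul _), integral_const_mul,
    integral_const_mul]

end

theorem mixture_path_hellinger_differentiable_general {𝒳 : Type*} [MeasurableSpace 𝒳]
    (ν : Measure 𝒳) (f0 fG : 𝒳 → ℝ)
    (hf0m : Measurable f0) (hfGm : Measurable fG)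
    (hf0 : 0 ≤ f0)
    (hf0int : ∫ x, f0 x ∂ν = 1)
    (hsupp : ∫ x, (if 0 < f0 x then fG x else 0) ∂ν = 1)
    (hL2 : Integrable (fun x => (fG x / f0 x) ^ 2 * f0 x) ν) :
    ((fun t => ∫ x,
          (Real.sqrt (((1 - t) * f0 x + t * fG x) / f0 x) - 1
              - t * (fG x / f0 x - 1) / 2) ^ 2 * f0 x ∂ν)
        =o[nhdsWithin 0 (Set.Ioi 0)] fun t => t ^ 2) ∧
    ((fun t => (∫ x, (if 0 < f0 x then (1 - t) * f0 x + t * fG x else 0) ∂ν) - 1)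
        =o[nhdsWithin 0 (Set.Ioi 0)] fun t => t ^ 2) := by
  have hf0i : Integrable f0 ν := .of_integral_ne_zero (by simp [hf0int])
  have hfGi : Integrable (fun x => if 0 < f0 x then fG x else 0) ν :=
    .of_integral_ne_zero (by simp [hsupp])
  have hscore := (integrable_sq_ratio_sub_one_mul hf0 hf0m hfGm hf0i hL2).div_const 4
  refine ⟨isLittleO_integral_of_dominated ?_ (.of_forall fun t => by fun_prop) hscore ?_
    (ae_of_all _ fun x => (mixture_remainder_isLittleO (hf0 x) _).mono nhdsWithin_le_nhds), ?_⟩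
  · filter_upwards [self_mem_nhdsWithin] with t (ht : 0 < t) using by positivity
  · refine .of_forall fun t => ae_of_all _ fun x => ?_
    have h₀ : 0 ≤ f0 x := hf0 x
    rw [Real.norm_of_nonneg (by positivity), norm_pow, Real.norm_eq_abs, sq_abs]
    exact mixture_remainder_le_sq h₀ _ _
  · simp [integral_mixture_indicator_pos hf0 hf0i hfGi, hf0int, hsupp]

/-- The linear mixture path `f_t = (1−t) f_{G_0} + t f_G` is Hellinger differentiable at
`t = 0` with score `ρ = f_G/f_{G_0} − 1`, provided `E_{G_0}(f_G/f_{G_0})² < ∞` and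
`∫ f_G I{f_{G_0} > 0} dν = 1`:
`E_{G_0}(√(f_t/f_0) − 1 − tρ/2)² = o(t²)` and `∫ f_t I{f_0>0} dν = 1 + o(t²)`. -/
theorem mixture_path_hellinger_differentiable {𝒳 : Type*} [MeasurableSpace 𝒳]
    (ν : Measure 𝒳) (f0 fG : 𝒳 → ℝ)
    (hf0m : Measurable f0) (hfGm : Measurable fG)
    (hf0 : 0 ≤ f0) (hfG : 0 ≤ fG)
    (hf0int : ∫ x, f0 x ∂ν = 1)
    (hsupp : ∫ x, (if 0 < f0 x then fG x else 0) ∂ν = 1)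
    (hL2 : Integrable (fun x => (fG x / f0 x) ^ 2 * f0 x) ν) :
    ((fun t => ∫ x,
          (Real.sqrt (((1 - t) * f0 x + t * fG x) / f0 x) - 1
              - t * (fG x / f0 x - 1) / 2) ^ 2 * f0 x ∂ν)
        =o[nhdsWithin 0 (Set.Ioi 0)] fun t => t ^ 2) ∧
    ((fun t => (∫ x, (if 0 < f0 x then (1 - t) * f0 x + t * fG x else 0) ∂ν) - 1)
        =o[nhdsWithin 0 (Set.Ioi 0)] fun t => t ^ 2) :=
  mixture_path_hellinger_differentiable_general ν f0 fG hf0m hfGm hf0 hf0int hsupp hL2
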